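/- arXiv:1906.02841 — 3 statements merged into one kernel-verified Lean document; each statement's English description precedes it below -/
import Mathlib

section
/- For all q ∈ (1,2), all κ ≥ 1, and all r ≥ 0, one has (r - κ)_+ ≤ 2^{q-1}·(r^{1/q} - κ^{1/q})_+^q + (2^{q-1} - 1)·κ·𝟙_{r>κ}. -/
lemma real_rpow_add_le (x y : ℝ) (hx : 0 ≤ x) (hy : 0 ≤ y) {p : ℝ} (hp : 1 ≤ p) :
    (x + y) ^ p ≤ 2 ^ (p - 1) * (x ^ p + y ^ p) := by
  have h := NNReal.rpow_add_le_mul_rpow_add_rpow x.toNNReal y.toNNReal hp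
  have := (NNReal.coe_le_coe).2 h
  push_cast at this
  rwa [Real.coe_toNNReal _ hx, Real.coe_toNNReal _ hy] at this

theorem pos_part_convexity_split (q κ r : ℝ)
    (hq1 : 1 < q) (hq2 : q < 2) (hκ : 1 ≤ κ) (hr : 0 ≤ r) :
    max (r - κ) 0 ≤ 2 ^ (q - 1) * (max (r ^ (1 / q) - κ ^ (1 / q)) 0) ^ q
      + (2 ^ (q - 1) - 1) * κ * (if κ < r then (1 : ℝ) else 0) := by
  have hq0 : 0 < q := by linarith
  have hκ0 : (0:ℝ) ≤ κ := by linarith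
  by_cases h : κ < r
  · rw [if_pos h, mul_one]
    have hrκ : κ ^ (1/q) ≤ r ^ (1/q) :=
      Real.rpow_le_rpow hκ0 h.le (by positivity)
    rw [max_eq_left (by linarith), max_eq_left (by linarith [hrκ])]
    have key := real_rpow_add_le (r ^ (1/q) - κ ^ (1/q)) (κ ^ (1/q))
      (by linarith) (by positivity) hq1.le
    rw [sub_add_cancel] at key
    have hr' : (r ^ (1/q)) ^ q = r := by
      rw [← Real.rpow_mul hr, one_div, inv_mul_cancel₀ hq0.ne', Real.rpow_one]
    have hκ' : (κ ^ (1/q)) ^ q = κ := by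
      rw [← Real.rpow_mul hκ0, one_div, inv_mul_cancel₀ hq0.ne', Real.rpow_one]
    rw [hr', hκ'] at key
    nlinarith [key]
  · rw [if_neg h, mul_zero, add_zero]
    push_neg at h
    rw [max_eq_right (by linarith)]
    exact mul_nonneg (by positivity) (Real.rpow_nonneg (le_max_right _ _) q)
end

section
/- Let 0 < ρ < 1/2, 0 < α < 1, M ≥ 1, and let (X_n) be a sequence of positive reals with X_0 ≤ M, X_1 ≤ M, and X_{n+1} < ρ·(max(1,X_n)^α + max(1,X_{n-1})^α) for all n ≥ 1. Then for every n ≥ 0, both X_{2n} and X_{2n+1} are at most max(2ρ, (2ρ)^{(1-α^n)/(1-α)}·M^{α^n}). -/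
theorem two_level_iteration (ρ α M : ℝ) (X : ℕ → ℝ)
    (hρ0 : 0 < ρ) (hρ : ρ < 1 / 2) (hα0 : 0 < α) (hα : α < 1) (hM : 1 ≤ M)
    (hXpos : ∀ n, 0 < X n)
    (hX0 : X 0 ≤ M) (hX1 : X 1 ≤ M)
    (hrec : ∀ n : ℕ, 1 ≤ n →
      X (n + 1) < ρ * ((max 1 (X n)) ^ α + (max 1 (X (n - 1))) ^ α)) :
    ∀ n : ℕ, X (2 * n) ≤ max (2 * ρ) ((2 * ρ) ^ ((1 - α ^ n) / (1 - α)) * M ^ (α ^ n)) ∧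
      X (2 * n + 1) ≤ max (2 * ρ) ((2 * ρ) ^ ((1 - α ^ n) / (1 - α)) * M ^ (α ^ n)) := by
  have h2ρ0 : (0:ℝ) < 2 * ρ := by linarith
  have h2ρ1 : 2 * ρ < 1 := by linarith
  have h1α : (0:ℝ) < 1 - α := by linarith
  have hM0 : (0:ℝ) ≤ M := by linarith
  set b : ℕ → ℝ := fun n => max (2 * ρ) ((2 * ρ) ^ ((1 - α ^ n) / (1 - α)) * M ^ (α ^ n))
    with hbdef
  have hexp : ∀ n : ℕ, 1 + (1 - α ^ n) / (1 - α) * α = (1 - α ^ (n+1)) / (1 - α) := by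
    intro n
    field_simp
    ring
  -- key step
  have key : ∀ n : ℕ, ∀ x y : ℝ, x ≤ b n → y ≤ b n →
      ρ * ((max 1 x) ^ α + (max 1 y) ^ α) ≤ b (n+1) := by
    intro n x y hxb hyb
    have h1x : (0:ℝ) ≤ max 1 x := le_trans zero_le_one (le_max_left _ _)
    have h1y : (0:ℝ) ≤ max 1 y := le_trans zero_le_one (le_max_left _ _)
    have hrx : (max 1 x) ^ α ≤ (max 1 (b n)) ^ α :=
      Real.rpow_le_rpow h1x (max_le_max le_rfl hxb) hα0.le
    have hry : (max 1 y) ^ α ≤ (max 1 (b n)) ^ α :=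
      Real.rpow_le_rpow h1y (max_le_max le_rfl hyb) hα0.le
    have hmain : ρ * ((max 1 x) ^ α + (max 1 y) ^ α) ≤ 2 * ρ * (max 1 (b n)) ^ α := by
      nlinarith
    refine le_trans hmain ?_
    rcases le_or_gt (b n) 1 with hle | hlt
    · rw [max_eq_left hle, Real.one_rpow, mul_one]
      exact le_max_left _ _
    · have hc : 1 < (2 * ρ) ^ ((1 - α ^ n) / (1 - α)) * M ^ (α ^ n) := by
        rcases lt_max_iff.mp hlt with h | h
        · linarith
        · exact h
      have hbn : b n = (2 * ρ) ^ ((1 - α ^ n) / (1 - α)) * M ^ (α ^ n) :=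
        max_eq_right (by linarith)
      rw [max_eq_right (le_of_lt hlt), hbn]
      have hr1 : (0:ℝ) ≤ (2 * ρ) ^ ((1 - α ^ n) / (1 - α)) := (Real.rpow_pos_of_pos h2ρ0 _).le
      have hr2 : (0:ℝ) ≤ M ^ (α ^ n) := Real.rpow_nonneg hM0 _
      rw [Real.mul_rpow hr1 hr2, ← Real.rpow_mul h2ρ0.le, ← Real.rpow_mul hM0]
      have heq : 2 * ρ * ((2*ρ) ^ ((1 - α ^ n) / (1 - α) * α) * M ^ (α ^ n * α))
          = (2*ρ) ^ (1 + (1 - α ^ n) / (1 - α) * α) * M ^ (α ^ n * α) := by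
        rw [Real.rpow_add h2ρ0, Real.rpow_one]
        ring
      rw [heq, hexp n, ← pow_succ]
      exact le_max_right _ _
  -- monotonicity
  have mono : ∀ n : ℕ, b (n+1) ≤ b n := by
    intro n
    apply max_le_max le_rfl
    have hpow : α ^ (n+1) ≤ α ^ n := pow_le_pow_of_le_one hα0.le hα.le (Nat.le_succ n)
    have hs : (1 - α ^ n) / (1 - α) ≤ (1 - α ^ (n+1)) / (1 - α) :=
      (div_le_div_iff_of_pos_right h1α).mpr (by linarith)
    exact mul_le_mul (Real.rpow_le_rpow_of_exponent_ge h2ρ0 h2ρ1.le hs)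
      (Real.rpow_le_rpow_of_exponent_le hM hpow) (Real.rpow_nonneg hM0 _)
      (Real.rpow_pos_of_pos h2ρ0 _).le
  -- induction
  intro n
  induction n with
  | zero =>
      have hb0 : M ≤ b 0 := by
        have : b 0 = max (2 * ρ) ((2 * ρ) ^ ((1 - α ^ 0) / (1 - α)) * M ^ (α ^ 0)) := rfl
        rw [this]
        refine le_max_of_le_right ?_
        simp [Real.rpow_one]
      exact ⟨le_trans hX0 hb0, le_trans hX1 hb0⟩
  | succ n ih =>
      obtain ⟨h2n, h2n1⟩ := ih
      have hA : X (2 * (n+1)) ≤ b (n+1) := by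
        have h := hrec (2*n+1) (by omega)
        have e : 2*n+1-1 = 2*n := by omega
        rw [e] at h
        have e2 : 2*(n+1) = 2*n+1+1 := by ring
        rw [e2]
        exact le_trans h.le (key n _ _ h2n1 h2n)
      have hB : X (2 * (n+1) + 1) ≤ b (n+1) := by
        have h := hrec (2*n+2) (by omega)
        have e : 2*n+2-1 = 2*n+1 := by omega
        rw [e] at h
        have e2 : 2*(n+1)+1 = 2*n+2+1 := by ring
        rw [e2]
        have hx : X (2*n+2) ≤ b n := by
          have e3 : 2*(n+1) = 2*n+2 := by ring
          rw [e3] at hA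
          exact le_trans hA (mono n)
        exact le_trans h.le (key n _ _ hx h2n1)
      exact ⟨hA, hB⟩
end

section
/- Let 0 < ρ < 1/2, 0 < α < 1, M ≥ 1, and let (X_n) be a sequence of positive reals with X_0, X_1 ≤ M and X_{n+1} < ρ(max(1,X_n)^α + max(1,X_{n-1})^α) for n ≥ 1. Then limsup_{n→∞} X_n ≤ 2ρ. -/
/-!
Put `Y n = max 1 (X n)`. Since `2ρ < 1`, the recursion gives
`Y (n + 2) ≤ max (Y n) (Y (n + 1)) ^ α`, so the pair maxima `Z n = max (Y n) (Y (n + 1))`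
satisfy `Z (n + 2) ≤ Z n ^ α`. Iterating, `Z n ≤ B ^ (α ^ (n / 2))` for a constant `B`, hence
`Y n → 1`, and the right-hand side of the recursion tends to `ρ (1 + 1) = 2ρ`.
-/

open Filter Topology

lemma max_one_le_max_rpow_of_lt {ρ α a b x : ℝ} (hρ : ρ ≤ 1 / 2) (hα : 0 ≤ α)
    (ha : 1 ≤ a) (hb : 1 ≤ b) (hx : x < ρ * (a ^ α + b ^ α)) :
    max 1 x ≤ max a b ^ α := by
  have hab : 1 ≤ max a b := ha.trans (le_max_left a b)
  have hsa : a ^ α ≤ max a b ^ α :=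
    Real.rpow_le_rpow (zero_le_one.trans ha) (le_max_left a b) hα
  have hsb : b ^ α ≤ max a b ^ α :=
    Real.rpow_le_rpow (zero_le_one.trans hb) (le_max_right a b) hα
  have hρs : ρ * (a ^ α + b ^ α) ≤ (a ^ α + b ^ α) / 2 := by
    nlinarith [mul_nonneg (sub_nonneg.2 hρ) (by positivity : 0 ≤ a ^ α + b ^ α)]
  exact max_le (Real.one_le_rpow hab hα) (by linarith)

section TwoStepRecursion

variable {α : ℝ} {Y : ℕ → ℝ}

lemma max_succ_succ_le_max_rpow (hα0 : 0 ≤ α) (hα1 : α ≤ 1) (hY1 : ∀ n, 1 ≤ Y n)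
    (hY : ∀ n, Y (n + 2) ≤ max (Y n) (Y (n + 1)) ^ α) (n : ℕ) :
    max (Y (n + 2)) (Y (n + 3)) ≤ max (Y n) (Y (n + 1)) ^ α := by
  set z := max (Y n) (Y (n + 1))
  have hz : 1 ≤ z := (hY1 n).trans (le_max_left _ _)
  have h2 : Y (n + 2) ≤ z ^ α := hY n
  have h3 : Y (n + 3) ≤ z ^ α := calc
    Y (n + 3) ≤ max (Y (n + 1)) (Y (n + 2)) ^ α := hY (n + 1)
    _ ≤ z ^ α := Real.rpow_le_rpow (zero_le_one.trans ((hY1 _).trans (le_max_left _ _)))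
        (max_le (le_max_right _ _) (h2.trans (Real.rpow_le_self_of_one_le hz hα1))) hα0
  exact max_le h2 h3

lemma le_rpow_pow_of_add_two_le_rpow (hα0 : 0 ≤ α) (hY0 : ∀ n, 0 ≤ Y n)
    (hY : ∀ n, Y (n + 2) ≤ Y n ^ α) (n k : ℕ) : Y (n + 2 * k) ≤ Y n ^ α ^ k := by
  induction k with
  | zero => simp
  | succ k ih => calc
      Y (n + 2 * (k + 1)) = Y (n + 2 * k + 2) := by ring_nf
      _ ≤ Y (n + 2 * k) ^ α := hY _
      _ ≤ (Y n ^ α ^ k) ^ α := Real.rpow_le_rpow (hY0 _) ih hα0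
      _ = Y n ^ α ^ (k + 1) := by rw [← Real.rpow_mul (hY0 n), pow_succ]

theorem tendsto_one_of_le_max_rpow (hα0 : 0 ≤ α) (hα1 : α < 1) (hY1 : ∀ n, 1 ≤ Y n)
    (hY : ∀ n, Y (n + 2) ≤ max (Y n) (Y (n + 1)) ^ α) : Tendsto Y atTop (𝓝 1) := by
  set Z : ℕ → ℝ := fun n => max (Y n) (Y (n + 1))
  have hZ1 : ∀ n, 1 ≤ Z n := fun n => (hY1 n).trans (le_max_left _ _)
  have hZiter := le_rpow_pow_of_add_two_le_rpow hα0 (fun n => zero_le_one.trans (hZ1 n))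
    (max_succ_succ_le_max_rpow hα0 hα1.le hY1 hY)
  set B := max (Z 0) (Z 1)
  have hB : 1 ≤ B := (hZ1 0).trans (le_max_left _ _)
  have hYB : ∀ n, Y n ≤ B ^ α ^ (n / 2) := fun n => calc
    Y n ≤ Z (n % 2 + 2 * (n / 2)) := by rw [Nat.mod_add_div]; exact le_max_left _ _
    _ ≤ Z (n % 2) ^ α ^ (n / 2) := hZiter _ _
    _ ≤ B ^ α ^ (n / 2) := by
      refine Real.rpow_le_rpow (zero_le_one.trans (hZ1 _)) ?_ (by positivity)
      rcases Nat.mod_two_eq_zero_or_one n with h | h <;> simp [h, B]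
  have hlim : Tendsto (fun n : ℕ => B ^ α ^ (n / 2)) atTop (𝓝 1) := by
    have hpow := (tendsto_pow_atTop_nhds_zero_of_lt_one hα0 hα1).comp
      (Nat.tendsto_div_const_atTop two_ne_zero)
    simpa [Function.comp_def] using
      (Real.continuousAt_const_rpow (by linarith : B ≠ 0)).tendsto.comp hpow
  exact tendsto_of_tendsto_of_tendsto_of_le_of_le tendsto_const_nhds hlim hY1 hYB

end TwoStepRecursion

theorem two_level_iteration_limsup_general (ρ α : ℝ) (X : ℕ → ℝ)
    (hρ : ρ < 1 / 2) (hα0 : 0 < α) (hα : α < 1)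
    (hXpos : ∀ n, 0 < X n)
    (hrec : ∀ n : ℕ, 1 ≤ n →
      X (n + 1) < ρ * ((max 1 (X n)) ^ α + (max 1 (X (n - 1))) ^ α)) :
    Filter.limsup X Filter.atTop ≤ 2 * ρ := by
  set Y : ℕ → ℝ := fun n => max 1 (X n)
  have hrec' : ∀ n, X (n + 2) < ρ * (Y (n + 1) ^ α + Y n ^ α) :=
    fun n => hrec (n + 1) le_add_self
  have hYlim : Tendsto Y atTop (𝓝 1) :=
    tendsto_one_of_le_max_rpow hα0.le hα (fun n => le_max_left _ _) fun n => by
      rw [max_comm]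
      exact max_one_le_max_rpow_of_lt hρ.le hα0.le (le_max_left _ _) (le_max_left _ _) (hrec' n)
  have hbound : Tendsto (fun n => ρ * (Y (n + 1) ^ α + Y n ^ α)) atTop (𝓝 (2 * ρ)) := by
    have hYα : Tendsto (fun n => Y n ^ α) atTop (𝓝 1) := by
      simpa using hYlim.rpow_const (Or.inr hα0.le)
    rw [show 2 * ρ = ρ * (1 + 1) by ring]
    exact ((hYα.comp (tendsto_add_atTop_nat 1)).add hYα).const_mul ρ
  calc limsup X atTop = limsup (fun n => X (n + 2)) atTop := (limsup_nat_add X 2).symm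
    _ ≤ limsup (fun n => ρ * (Y (n + 1) ^ α + Y n ^ α)) atTop :=
      limsup_le_limsup (Eventually.of_forall fun n => (hrec' n).le)
        (isCoboundedUnder_le_of_le atTop fun n => (hXpos _).le) hbound.isBoundedUnder_le
    _ = 2 * ρ := hbound.limsup_eq

theorem two_level_iteration_limsup (ρ α M : ℝ) (X : ℕ → ℝ)
    (hρ0 : 0 < ρ) (hρ : ρ < 1 / 2) (hα0 : 0 < α) (hα : α < 1) (hM : 1 ≤ M)
    (hXpos : ∀ n, 0 < X n)
    (hX0 : X 0 ≤ M) (hX1 : X 1 ≤ M)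
    (hrec : ∀ n : ℕ, 1 ≤ n →
      X (n + 1) < ρ * ((max 1 (X n)) ^ α + (max 1 (X (n - 1))) ^ α)) :
    Filter.limsup X Filter.atTop ≤ 2 * ρ :=
  two_level_iteration_limsup_general ρ α X hρ hα0 hα hXpos hrec
end
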